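/- arXiv:1607.06918 — 2 statements merged into one kernel-verified Lean document; each statement's English description precedes it below -/
import Mathlib

section
/- If G is a g-natural metric on the tangent bundle TM of a Riemannian manifold (M,g) of dimension at least 2, determined by functions a₁,a₂,a₃,b₁,b₂,b₃ : [0,∞) → ℝ, and one defines a(t) = a₁(t)(a₁(t)+a₃(t)) - a₂(t)², Fⱼ(t) = aⱼ(t) + t·bⱼ(t), and F(t) = F₁(t)(F₁(t)+F₃(t)) - F₂(t)², then at a point (x,u) with t = g(u,u), the symmetric bilinear form G_{(x,u)} on the 2n-dimensional space (decomposed into horizontal and vertical parts) is non-degenerate if and only if a(t) ≠ 0 and F(t) ≠ 0. -/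
open scoped RealInnerProductSpace

/-!
Split `V = ℝ u ⊕ u^⊥`. On pairs `(x • v, y • v)` with `v ⊥ u` the form acts through the
matrix `[[a₁ + a₃, a₂], [a₂, a₁]]`, of determinant `a`; on pairs `(x • u, y • u)` it acts through
`[[F₁ + F₃, F₂], [F₂, F₁]]`, of determinant `F`. A kernel vector `(x, y)` of either matrix
therefore gives a vector in the radical of `G`. Conversely, pairing a radical vector `Z` with
`u` shows that `(⟪Z.1, u⟫, ⟪Z.2, u⟫)` lies in the kernel of the second matrix, so it vanishes,
and then `Z` itself lies in the kernel of the first matrix.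
-/

theorem eq_zero_of_smul_add_smul_eq_zero {K M : Type*} [Field K] [AddCommGroup M] [Module K M]
    {a b c d : K} {x y : M} (hdet : a * d - b * c ≠ 0)
    (h₁ : a • x + b • y = 0) (h₂ : c • x + d • y = 0) : x = 0 ∧ y = 0 := by
  have hx : (a * d - b * c) • x = d • (a • x + b • y) - b • (c • x + d • y) := by module
  have hy : (a * d - b * c) • y = a • (c • x + d • y) - c • (a • x + b • y) := by module
  rw [h₁, h₂] at hx hy
  simp only [smul_zero, sub_zero, smul_eq_zero, hdet, false_or] at hx hy
  exact ⟨hx, hy⟩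

theorem exists_ne_zero_of_det_eq_zero {K : Type*} [Field K] {a b c d : K}
    (hdet : a * d - b * c = 0) :
    ∃ x y : K, (x, y) ≠ 0 ∧ a * x + b * y = 0 ∧ c * x + d * y = 0 := by
  obtain ⟨v, hv, hker⟩ := Matrix.exists_mulVec_eq_zero_iff.mpr
    (by rwa [Matrix.det_fin_two_of] : (!![a, b; c, d]).det = 0)
  refine ⟨v 0, v 1, fun h => hv ?_, ?_, ?_⟩
  · ext i; fin_cases i <;> simp_all [Prod.ext_iff]
  · simpa [Matrix.mulVec, dotProduct, Fin.sum_univ_two] using congrFun hker 0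
  · simpa [Matrix.mulVec, dotProduct, Fin.sum_univ_two] using congrFun hker 1

theorem prod_mk_smul_ne_zero {K M : Type*} [Field K] [AddCommMonoid M] [Module K M]
    {x y : K} {v : M} (hxy : (x, y) ≠ 0) (hv : v ≠ 0) :
    (x • v, y • v) ≠ 0 := by
  contrapose! hxy
  simp_all [Prod.ext_iff]

theorem exists_ne_zero_inner_eq_zero {V : Type*} [NormedAddCommGroup V] [InnerProductSpace ℝ V]
    [FiniteDimensional ℝ V] (hV : 2 ≤ Module.finrank ℝ V) (u : V) :
    ∃ v : V, v ≠ 0 ∧ ⟪v, u⟫ = 0 := by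
  have hspan : (ℝ ∙ u) ≠ ⊤ := fun h => by
    have := finrank_span_le_card (R := ℝ) ({u} : Set V)
    rw [h, finrank_top] at this
    simp only [Set.toFinset_singleton, Finset.card_singleton] at this
    omega
  obtain ⟨v, hv, hv0⟩ := Submodule.exists_mem_ne_zero_of_ne_bot
    (mt Submodule.orthogonal_eq_bot_iff.mp hspan)
  exact ⟨v, hv0, Submodule.mem_orthogonal_singleton_iff_inner_left.mp hv⟩

section GNatural

variable {V : Type*} [NormedAddCommGroup V] [InnerProductSpace ℝ V] (p q r p' q' r' : ℝ) (u : V)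

def gNaturalForm (Z W : V × V) : ℝ :=
  p * ⟪Z.1, W.1⟫ + p' * ⟪Z.1, u⟫ * ⟪W.1, u⟫
    + q * (⟪Z.1, W.2⟫ + ⟪Z.2, W.1⟫) + q' * (⟪Z.1, u⟫ * ⟪W.2, u⟫ + ⟪Z.2, u⟫ * ⟪W.1, u⟫)
    + r * ⟪Z.2, W.2⟫ + r' * ⟪Z.2, u⟫ * ⟪W.2, u⟫

def gNaturalFlat (Z : V × V) : V × V :=
  (p • Z.1 + q • Z.2 + (p' * ⟪Z.1, u⟫ + q' * ⟪Z.2, u⟫) • u,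
    q • Z.1 + r • Z.2 + (q' * ⟪Z.1, u⟫ + r' * ⟪Z.2, u⟫) • u)

theorem gNaturalForm_eq_inner_gNaturalFlat (Z W : V × V) :
    gNaturalForm p q r p' q' r' u Z W =
      ⟪(gNaturalFlat p q r p' q' r' u Z).1, W.1⟫ + ⟪(gNaturalFlat p q r p' q' r' u Z).2, W.2⟫ := by
  simp only [gNaturalForm, gNaturalFlat, real_inner_comm W.1, real_inner_comm W.2,
    inner_add_right, real_inner_smul_right]
  ring

theorem forall_gNaturalForm_eq_zero_iff (Z : V × V) :
    (∀ W, gNaturalForm p q r p' q' r' u Z W = 0) ↔ gNaturalFlat p q r p' q' r' u Z = 0 := by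
  simp only [gNaturalForm_eq_inner_gNaturalFlat]
  refine ⟨fun h => ?_, fun h W => by simp [h]⟩
  set Y := gNaturalFlat p q r p' q' r' u Z
  have h₁ := h (Y.1, 0)
  have h₂ := h (0, Y.2)
  simp only [inner_zero_right, add_zero, zero_add, inner_self_eq_zero] at h₁ h₂
  exact Prod.ext h₁ h₂

theorem eq_zero_of_gNaturalFlat_eq_zero (hA : p * r - q ^ 2 ≠ 0)
    (hF : (p + ⟪u, u⟫ * p') * (r + ⟪u, u⟫ * r') - (q + ⟪u, u⟫ * q') ^ 2 ≠ 0)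
    {Z : V × V} (hZ : gNaturalFlat p q r p' q' r' u Z = 0) : Z = 0 := by
  obtain ⟨h₁, h₂⟩ := Prod.ext_iff.mp hZ
  simp only [gNaturalFlat, Prod.fst_zero, Prod.snd_zero] at h₁ h₂
  rw [sq] at hA hF
  have hs : ⟪Z.1, u⟫ = 0 ∧ ⟪Z.2, u⟫ = 0 := by
    refine eq_zero_of_smul_add_smul_eq_zero hF ?_ ?_
    · have := congrArg (fun w : V => ⟪w, u⟫) h₁
      simp only [inner_add_left, real_inner_smul_left, inner_zero_left, smul_eq_mul] at this ⊢
      linear_combination this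
    · have := congrArg (fun w : V => ⟪w, u⟫) h₂
      simp only [inner_add_left, real_inner_smul_left, inner_zero_left, smul_eq_mul] at this ⊢
      linear_combination this
  simp only [hs, mul_zero, add_zero, zero_smul] at h₁ h₂
  exact Prod.ext_iff.mpr (eq_zero_of_smul_add_smul_eq_zero hA h₁ h₂)

theorem gNaturalFlat_smul_of_inner_eq_zero {v : V} (hv : ⟪v, u⟫ = 0) (x y : ℝ) :
    gNaturalFlat p q r p' q' r' u (x • v, y • v) = ((p * x + q * y) • v, (q * x + r * y) • v) := by
  simp only [gNaturalFlat, real_inner_smul_left, hv, mul_zero, add_zero, zero_smul, Prod.mk.injEq]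
  constructor <;> module

theorem gNaturalFlat_smul_self (x y : ℝ) :
    gNaturalFlat p q r p' q' r' u (x • u, y • u) =
      (((p + ⟪u, u⟫ * p') * x + (q + ⟪u, u⟫ * q') * y) • u,
        ((q + ⟪u, u⟫ * q') * x + (r + ⟪u, u⟫ * r') * y) • u) := by
  simp only [gNaturalFlat, real_inner_smul_left, Prod.mk.injEq]
  constructor <;> module

theorem gNaturalForm_nondegenerate_iff (hperp : ∃ v : V, v ≠ 0 ∧ ⟪v, u⟫ = 0) :
    (∀ Z, (∀ W, gNaturalForm p q r p' q' r' u Z W = 0) → Z = 0) ↔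
      p * r - q ^ 2 ≠ 0 ∧
        (p + ⟪u, u⟫ * p') * (r + ⟪u, u⟫ * r') - (q + ⟪u, u⟫ * q') ^ 2 ≠ 0 := by
  simp only [forall_gNaturalForm_eq_zero_iff]
  refine ⟨fun h => ?_, fun ⟨hA, hF⟩ Z => eq_zero_of_gNaturalFlat_eq_zero p q r p' q' r' u hA hF⟩
  by_contra hdeg
  suffices ∃ Z ≠ 0, gNaturalFlat p q r p' q' r' u Z = 0 by
    obtain ⟨Z, hZ0, hZ⟩ := this
    exact hZ0 (h Z hZ)
  by_cases hA : p * r - q ^ 2 = 0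
  · obtain ⟨v, hv0, hv⟩ := hperp
    obtain ⟨x, y, hxy, h₁, h₂⟩ :=
      exists_ne_zero_of_det_eq_zero (show p * r - q * q = 0 by linear_combination hA)
    refine ⟨_, prod_mk_smul_ne_zero hxy hv0, ?_⟩
    rw [gNaturalFlat_smul_of_inner_eq_zero p q r p' q' r' u hv, h₁, h₂, zero_smul,
      Prod.mk_zero_zero]
  · have hF : (p + ⟪u, u⟫ * p') * (r + ⟪u, u⟫ * r') - (q + ⟪u, u⟫ * q') ^ 2 = 0 := by
      tauto
    -- at `u = 0` the two determinants coincide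
    have hu : u ≠ 0 := by
      rintro rfl
      simp_all
    obtain ⟨x, y, hxy, h₁, h₂⟩ := exists_ne_zero_of_det_eq_zero (a := p + ⟪u, u⟫ * p')
      (b := q + ⟪u, u⟫ * q') (c := q + ⟪u, u⟫ * q') (d := r + ⟪u, u⟫ * r')
      (by linear_combination hF)
    refine ⟨_, prod_mk_smul_ne_zero hxy hu, ?_⟩
    rw [gNaturalFlat_smul_self, h₁, h₂, zero_smul, Prod.mk_zero_zero]

end GNatural

/-- Lemma 2.2 (non-degeneracy criterion for a g-natural metric), pointwise version:
at a point `(x,u)` with `t = g(u,u)`, the symmetric bilinear form `G` on the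
horizontal ⊕ vertical decomposition (each summand an `n`-dimensional inner product
space, `n ≥ 2`) is non-degenerate iff `a t ≠ 0` and `F t ≠ 0`. -/
theorem g_natural_metric_nondegenerate_iff
    (n : ℕ) (hn : 2 ≤ n)
    (a₁ a₂ a₃ b₁ b₂ b₃ : ℝ → ℝ)
    (a : ℝ → ℝ) (ha : ∀ t, a t = a₁ t * (a₁ t + a₃ t) - (a₂ t) ^ 2)
    (F₁ F₂ F₃ : ℝ → ℝ)
    (hF₁ : ∀ t, F₁ t = a₁ t + t * b₁ t)
    (hF₂ : ∀ t, F₂ t = a₂ t + t * b₂ t)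
    (hF₃ : ∀ t, F₃ t = a₃ t + t * b₃ t)
    (F : ℝ → ℝ) (hF : ∀ t, F t = F₁ t * (F₁ t + F₃ t) - (F₂ t) ^ 2)
    (u : EuclideanSpace ℝ (Fin n)) (t : ℝ) (ht : t = ⟪u, u⟫)
    (G : (EuclideanSpace ℝ (Fin n) × EuclideanSpace ℝ (Fin n)) →
         (EuclideanSpace ℝ (Fin n) × EuclideanSpace ℝ (Fin n)) → ℝ)
    (hG : ∀ Z W, G Z W =
      (a₁ t + a₃ t) * ⟪Z.1, W.1⟫ + (b₁ t + b₃ t) * ⟪Z.1, u⟫ * ⟪W.1, u⟫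
      + a₂ t * (⟪Z.1, W.2⟫ + ⟪Z.2, W.1⟫)
      + b₂ t * (⟪Z.1, u⟫ * ⟪W.2, u⟫ + ⟪Z.2, u⟫ * ⟪W.1, u⟫)
      + a₁ t * ⟪Z.2, W.2⟫ + b₁ t * ⟪Z.2, u⟫ * ⟪W.2, u⟫) :
    (∀ Z, (∀ W, G Z W = 0) → Z = 0) ↔ (a t ≠ 0 ∧ F t ≠ 0) := by
  have hG' : G = gNaturalForm (a₁ t + a₃ t) (a₂ t) (a₁ t) (b₁ t + b₃ t) (b₂ t) (b₁ t) u :=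
    funext₂ hG
  have hperp := exists_ne_zero_inner_eq_zero (by simpa using hn) u
  have hat : a t = (a₁ t + a₃ t) * a₁ t - a₂ t ^ 2 := by rw [ha]; ring
  have hFt : F t = (a₁ t + a₃ t + t * (b₁ t + b₃ t)) * (a₁ t + t * b₁ t)
      - (a₂ t + t * b₂ t) ^ 2 := by
    rw [hF, hF₁, hF₂, hF₃]; ring
  rw [hG', gNaturalForm_nondegenerate_iff _ _ _ _ _ _ u hperp, ← ht, hat, hFt]
end

section
/- Let V be a real inner product space, let W ⊆ V be a subspace with orthogonal complement W⊥ of dimension k ≥ 2, let (η_x) be an orthonormal basis of W⊥, and let H, V' ∈ V. Suppose that for every u = Σ vˣ η_x ∈ W⊥ and every basis index x, the quantity g(η_x, a₂H + a₁V' + g(u, b₂H + b₁V')·u) = 0, where a₁,a₂,b₁,b₂ are smooth functions of r² = g(u,u) (evaluated at r² together with their derivatives as in the paper's system). Then the identities obtained by differentiating in vˣ and solving the resulting linear system imply g(u, b₂H + b₁V') = 0 and g(η_x, b₂H + b₁V') = 0 for every u ∈ W⊥ and every x. -/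
open scoped RealInnerProductSpace

/-- Proposition 5, items 12–13: if `g(η_x, S) = 0` for
`S = a₂H + a₁V' + g(u, b₂H + b₁V')·u` (coefficients smooth functions of `r² = g(u,u)`)
for every `u` in the normal space `Wᗮ` of dimension `k ≥ 2` and every member `η_x` of an
orthonormal basis of `Wᗮ`, then `g(u, b₂H + b₁V') = 0` and `g(η_x, b₂H + b₁V') = 0`
for every such `u` and `x`. -/
theorem prop5_items_12_13
    {E : Type*} [NormedAddCommGroup E] [InnerProductSpace ℝ E]
    [FiniteDimensional ℝ E]
    (W : Submodule ℝ E) (k : ℕ) (hk : 2 ≤ k)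
    (hdim : Module.finrank ℝ Wᗮ = k)
    (η : Fin k → E) (hη : Orthonormal ℝ η)
    (hspan : Submodule.span ℝ (Set.range η) = Wᗮ)
    (H V' : E)
    (a₁ a₂ b₁ b₂ : ℝ → ℝ)
    (ha₁ : ContDiff ℝ (⊤ : ℕ∞) a₁) (ha₂ : ContDiff ℝ (⊤ : ℕ∞) a₂)
    (hb₁ : ContDiff ℝ (⊤ : ℕ∞) b₁) (hb₂ : ContDiff ℝ (⊤ : ℕ∞) b₂)
    (hS : ∀ u ∈ Wᗮ, ∀ x : Fin k,
      ⟪η x, a₂ ⟪u, u⟫ • H + a₁ ⟪u, u⟫ • V'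
        + ⟪u, b₂ ⟪u, u⟫ • H + b₁ ⟪u, u⟫ • V'⟫ • u⟫ = 0) :
    ∀ u ∈ Wᗮ, ⟪u, b₂ ⟪u, u⟫ • H + b₁ ⟪u, u⟫ • V'⟫ = 0 ∧
      ∀ x : Fin k, ⟪η x, b₂ ⟪u, u⟫ • H + b₁ ⟪u, u⟫ • V'⟫ = 0 := by
  have hite : ∀ i j, ⟪η i, η j⟫ = if i = j then (1:ℝ) else 0 :=
    fun i j => orthonormal_iff_ite.mp hη i j
  have hηW : ∀ x, η x ∈ Wᗮ := fun x =>
    hspan ▸ Submodule.subset_span (Set.mem_range_self x)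
  set c : Fin k → ℝ → ℝ := fun x t => b₂ t * ⟪η x, H⟫ + b₁ t * ⟪η x, V'⟫ with hc
  have hccont : ∀ x, Continuous (c x) := fun x =>
    (hb₂.continuous.mul continuous_const).add (hb₁.continuous.mul continuous_const)
  have hnorm : ∀ (s : ℝ) (y : Fin k), ⟪s • η y, s • η y⟫ = s ^ 2 := by
    intro s y
    rw [real_inner_smul_left, real_inner_smul_right, hite]
    simp [sq]
  have hApos : ∀ (x : Fin k) (t : ℝ), 0 < t →
      a₂ t * ⟪η x, H⟫ + a₁ t * ⟪η x, V'⟫ = 0 := by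
    intro x t ht
    obtain ⟨y, hy⟩ := Fintype.exists_ne_of_one_lt_card
      (by simpa using lt_of_lt_of_le one_lt_two hk) x
    set s := Real.sqrt t with hs
    have hs2 : s ^ 2 = t := Real.sq_sqrt ht.le
    have hu : (s • η y) ∈ Wᗮ := Submodule.smul_mem _ _ (hηW y)
    have h0 := hS (s • η y) hu x
    rw [hnorm, hs2] at h0
    simp only [inner_add_right, real_inner_smul_right, real_inner_smul_left,
      hite, if_neg (Ne.symm hy), mul_zero, add_zero] at h0
    linarith [h0]
  have keypos : ∀ (x : Fin k) (t : ℝ), 0 < t → c x t = 0 := by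
    intro x t ht
    set s := Real.sqrt t with hs
    have hs2 : s ^ 2 = t := Real.sq_sqrt ht.le
    have hu : (s • η x) ∈ Wᗮ := Submodule.smul_mem _ _ (hηW x)
    have h0 := hS (s • η x) hu x
    rw [hnorm, hs2] at h0
    simp only [inner_add_right, real_inner_smul_right, real_inner_smul_left,
      hite, eq_self_iff_true, if_true, mul_one] at h0
    have hA := hApos x t ht
    have h1 : t * c x t = 0 := by
      simp only [hc]
      linear_combination h0 - hA - (b₂ t * ⟪η x, H⟫ + b₁ t * ⟪η x, V'⟫) * hs2
    exact (mul_eq_zero.mp h1).resolve_left (ne_of_gt ht)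
  have key : ∀ (x : Fin k) (t : ℝ), 0 ≤ t → c x t = 0 := by
    intro x t ht
    rcases ht.lt_or_eq with ht | ht
    · exact keypos x t ht
    · subst ht
      have hlim : Filter.Tendsto (c x) (nhdsWithin 0 (Set.Ioi 0)) (nhds (c x 0)) :=
        ((hccont x).tendsto 0).mono_left nhdsWithin_le_nhds
      have hlim0 : Filter.Tendsto (c x) (nhdsWithin 0 (Set.Ioi 0)) (nhds 0) := by
        refine Filter.Tendsto.congr' ?_ tendsto_const_nhds
        filter_upwards [self_mem_nhdsWithin] with t ht
        exact (keypos x t ht).symm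
      exact tendsto_nhds_unique hlim hlim0
  intro u hu
  have ht : (0:ℝ) ≤ ⟪u, u⟫ := real_inner_self_nonneg
  have hwx : ∀ x : Fin k, ⟪η x, b₂ ⟪u, u⟫ • H + b₁ ⟪u, u⟫ • V'⟫ = 0 := by
    intro x
    have := key x ⟪u, u⟫ ht
    rw [inner_add_right, real_inner_smul_right, real_inner_smul_right]
    simpa [hc] using this
  refine ⟨?_, hwx⟩
  have hu' : u ∈ Submodule.span ℝ (Set.range η) := hspan ▸ hu
  have horth : ∀ (w : E), (∀ x : Fin k, ⟪η x, w⟫ = 0) →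
      ∀ v ∈ Submodule.span ℝ (Set.range η), ⟪v, w⟫ = 0 := by
    intro w hw v hv
    induction hv using Submodule.span_induction with
    | mem v hv =>
        obtain ⟨x, rfl⟩ := hv
        exact hw x
    | zero => simp
    | add v₁ v₂ _ _ ih₁ ih₂ => rw [inner_add_left, ih₁, ih₂, add_zero]
    | smul a v _ ih => rw [real_inner_smul_left, ih, mul_zero]
  exact horth _ hwx u hu'
end
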